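/- (Theorem 3.2, characterization of the equality condition.) Let n ≥ 1, let F : 𝒦ⁿ → [0,∞) be positively homogeneous, increasing and concave, and let p ∈ (1,∞). Then the following two assertions are equivalent: (1) for all K, L ∈ 𝒦ⁿₒ, the function F_{p;K,L}(α) = F((1-α)·_p K +_p α·_p L)^p is affine on [0,1] if and only if K and L are dilates; (2) F restricted to 𝒦ⁿₒ is strictly increasing, i.e. K, L ∈ 𝒦ⁿₒ with K ⊊ L implies F(K) < F(L). -/

import Mathlib

/-!
The support function of `(1-α)·_p K +_p α·_p L` is the weighted `p`-mean
`((1-α) h_K ^ p + α h_L ^ p) ^ (1/p)` of `h_K` and `h_L`, and this `p`-mean lies above each of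
its tangent planes, touching only along the ray through the point of tangency (Young's
inequality).

(2 ⇒ 1) If `F_{p;K,L}` is affine, then `F M` is the `p`-mean of `F K` and `F L` for the
midpoint combination `M`. The body `s K + t L` whose support function is the tangent plane at
`(F K, F L)` evaluated at `(h_K, h_L)` lies in `M`, while concavity and homogeneity give it an
`F`-value at least `F M`. Strict monotonicity makes it equal to `M`, and the equality case of
the tangent inequality in every direction then makes `h_K / h_L` constant. For dilates,
everything is explicit.

(1 ⇒ 2) If `K ⊊ L` but `F K = F L`, every combination is squeezed between `K` and `L`, so
`F_{p;K,L}` is constant; hence `K = c L` with `c ≠ 1`, which forces `F L = 0`. But then an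
off-center half of `L` has the same `F`-value as `L` without being a dilate of it.
-/

open scoped Pointwise RealInnerProductSpace

/-- A convex body in `ℝⁿ`: a compact convex set with nonempty interior. -/
def IsConvexBody {n : ℕ} (K : Set (EuclideanSpace ℝ (Fin n))) : Prop :=
  IsCompact K ∧ Convex ℝ K ∧ (interior K).Nonempty

/-- A convex body containing the origin in its interior. -/
def IsConvexBodyO {n : ℕ} (K : Set (EuclideanSpace ℝ (Fin n))) : Prop :=
  IsCompact K ∧ Convex ℝ K ∧ (0 : EuclideanSpace ℝ (Fin n)) ∈ interior K

/-- The support function of a set: `h_K(u) = sup { ⟪x, u⟫ : x ∈ K }`. -/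
noncomputable def supp {n : ℕ} (K : Set (EuclideanSpace ℝ (Fin n)))
    (u : EuclideanSpace ℝ (Fin n)) : ℝ :=
  sSup ((fun x => ⟪x, u⟫) '' K)

/-- The `L_p` combination `(1-α)·_p K +_p α·_p L` of two convex bodies containing the
origin in their interiors: the convex body whose support function `h` satisfies
`h(u)^p = (1-α) h_K(u)^p + α h_L(u)^p` for all unit vectors `u`, realized as the set of
points whose inner product with every unit vector `u` is at most
`((1-α) h_K(u)^p + α h_L(u)^p)^{1/p}`. -/
noncomputable def lpComb {n : ℕ} (p α : ℝ)
    (K L : Set (EuclideanSpace ℝ (Fin n))) : Set (EuclideanSpace ℝ (Fin n)) :=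
  {x | ∀ u : EuclideanSpace ℝ (Fin n), ‖u‖ = 1 →
    ⟪x, u⟫ ≤ ((1 - α) * supp K u ^ p + α * supp L u ^ p) ^ (1 / p)}

noncomputable def pMean (p α x y : ℝ) : ℝ := ((1 - α) * x ^ p + α * y ^ p) ^ (1 / p)

noncomputable def pMeanTangent (p α A B x y : ℝ) : ℝ :=
  (1 - α) * (A / pMean p α A B) ^ (p - 1) * x + α * (B / pMean p α A B) ^ (p - 1) * y

section pMean

variable {p α x y : ℝ}

lemma weighted_rpow_nonneg (hα : α ∈ Set.Icc (0 : ℝ) 1) (hx : 0 ≤ x) (hy : 0 ≤ y) :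
    0 ≤ (1 - α) * x ^ p + α * y ^ p :=
  add_nonneg (mul_nonneg (sub_nonneg.2 hα.2) (Real.rpow_nonneg hx p))
    (mul_nonneg hα.1 (Real.rpow_nonneg hy p))

lemma weighted_rpow_pos (hα : α ∈ Set.Icc (0 : ℝ) 1) (hx : 0 < x) (hy : 0 < y) :
    0 < (1 - α) * x ^ p + α * y ^ p := by
  rcases hα.2.lt_or_eq with hα1 | rfl
  · have := mul_pos (sub_pos.2 hα1) (Real.rpow_pos_of_pos hx p)
    have := mul_nonneg hα.1 (Real.rpow_nonneg hy.le p)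
    linarith
  · simpa using Real.rpow_pos_of_pos hy p

lemma pMean_pos (hα : α ∈ Set.Icc (0 : ℝ) 1) (hx : 0 < x) (hy : 0 < y) :
    0 < pMean p α x y :=
  Real.rpow_pos_of_pos (weighted_rpow_pos hα hx hy) _

lemma pMean_nonneg (hα : α ∈ Set.Icc (0 : ℝ) 1) (hx : 0 ≤ x) (hy : 0 ≤ y) :
    0 ≤ pMean p α x y :=
  Real.rpow_nonneg (weighted_rpow_nonneg hα hx hy) _

lemma pMean_rpow (hp : p ≠ 0) (hα : α ∈ Set.Icc (0 : ℝ) 1) (hx : 0 ≤ x) (hy : 0 ≤ y) :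
    pMean p α x y ^ p = (1 - α) * x ^ p + α * y ^ p := by
  rw [pMean, ← Real.rpow_mul (weighted_rpow_nonneg hα hx hy), one_div_mul_cancel hp,
    Real.rpow_one]

lemma pMean_self (hp : p ≠ 0) (hx : 0 ≤ x) : pMean p α x x = x := by
  rw [pMean, ← add_mul, sub_add_cancel, one_mul, ← Real.rpow_mul hx, mul_one_div_cancel hp,
    Real.rpow_one]

lemma pMean_zero (hp : p ≠ 0) (hx : 0 ≤ x) : pMean p 0 x y = x := by
  rw [pMean, sub_zero, one_mul, zero_mul, add_zero, ← Real.rpow_mul hx, mul_one_div_cancel hp,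
    Real.rpow_one]

lemma pMean_one (hp : p ≠ 0) (hy : 0 ≤ y) : pMean p 1 x y = y := by
  rw [pMean, sub_self, zero_mul, zero_add, one_mul, ← Real.rpow_mul hy, mul_one_div_cancel hp,
    Real.rpow_one]

lemma pMean_mono (hp : 0 < p) (hα : α ∈ Set.Icc (0 : ℝ) 1) {x' y' : ℝ} (hx : 0 ≤ x)
    (hy : 0 ≤ y) (hxx' : x ≤ x') (hyy' : y ≤ y') : pMean p α x y ≤ pMean p α x' y' := by
  have := hα.1
  have := sub_nonneg.2 hα.2
  unfold pMean
  gcongr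

lemma pMean_mul (hp : p ≠ 0) (hα : α ∈ Set.Icc (0 : ℝ) 1) {c : ℝ} (hc : 0 ≤ c) (hx : 0 ≤ x)
    (hy : 0 ≤ y) : pMean p α (c * x) (c * y) = c * pMean p α x y := by
  rw [pMean, Real.mul_rpow hc hx, Real.mul_rpow hc hy,
    show (1 - α) * (c ^ p * x ^ p) + α * (c ^ p * y ^ p) = c ^ p * ((1 - α) * x ^ p + α * y ^ p)
      by ring,
    Real.mul_rpow (Real.rpow_nonneg hc p) (weighted_rpow_nonneg hα hx hy), pMean,
    ← Real.rpow_mul hc, mul_one_div_cancel hp, Real.rpow_one]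

end pMean

section tangent

variable {p a x : ℝ}

lemma rpow_sub_one_rpow_conjExponent (hp : 1 < p) (ha : 0 ≤ a) :
    (a ^ (p - 1)) ^ p.conjExponent = a ^ p := by
  rw [← Real.rpow_mul ha, Real.conjExponent, mul_div_cancel₀ _ (sub_ne_zero.2 hp.ne')]

/-- Young's inequality in tangent-line form: the tangent of `t ↦ t ^ p` at `a` lies below
the graph. -/
lemma rpow_tangent_le (hp : 1 < p) (ha : 0 ≤ a) (hx : 0 ≤ x) :
    p * (a ^ (p - 1) * x) ≤ (p - 1) * a ^ p + x ^ p := by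
  have hyoung := Real.young_inequality_of_nonneg (Real.rpow_nonneg ha (p - 1)) hx
    (Real.HolderConjugate.conjExponent hp).symm
  rw [rpow_sub_one_rpow_conjExponent hp ha, Real.conjExponent] at hyoung
  have hp0 : 0 < p := by linarith
  have hp1 : 0 < p - 1 := by linarith
  field_simp at hyoung
  linarith

lemma rpow_tangent_eq_iff (hp : 1 < p) (ha : 0 ≤ a) (hx : 0 ≤ x) :
    p * (a ^ (p - 1) * x) = (p - 1) * a ^ p + x ^ p ↔ a = x := by
  have hyoung := Real.young_inequality_eq_iff_of_nonneg (Real.rpow_nonneg ha (p - 1)) hx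
    (Real.HolderConjugate.conjExponent hp).symm
  rw [rpow_sub_one_rpow_conjExponent hp ha, Real.conjExponent,
    Real.rpow_left_inj ha hx (by linarith)] at hyoung
  rw [← hyoung]
  have hp0 : 0 < p := by linarith
  have hp1 : 0 < p - 1 := by linarith
  field_simp

end tangent

section pMeanTangent

variable {p α A B x y : ℝ}

lemma pMean_normalized (hp : p ≠ 0) (hα : α ∈ Set.Icc (0 : ℝ) 1) (hx : 0 < x) (hy : 0 < y) :
    (1 - α) * (x / pMean p α x y) ^ p + α * (y / pMean p α x y) ^ p = 1 := by
  have hM := pMean_pos (p := p) hα hx hy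
  rw [Real.div_rpow hx.le hM.le, Real.div_rpow hy.le hM.le, pMean_rpow hp hα hx.le hy.le]
  field_simp [(weighted_rpow_pos (p := p) hα hx hy).ne']

/-- Each bracket on the right is the gap in `rpow_tangent_le` at the normalized points
`A / pMean p α A B` and `x / pMean p α x y` (resp. `B`, `y`). -/
lemma pMean_sub_pMeanTangent (hp : p ≠ 0) (hα : α ∈ Set.Icc (0 : ℝ) 1) (hA : 0 < A)
    (hB : 0 < B) (hx : 0 < x) (hy : 0 < y) :
    p * (pMean p α x y - pMeanTangent p α A B x y) = pMean p α x y *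
      ((1 - α) * ((p - 1) * (A / pMean p α A B) ^ p + (x / pMean p α x y) ^ p
          - p * ((A / pMean p α A B) ^ (p - 1) * (x / pMean p α x y))) +
        α * ((p - 1) * (B / pMean p α A B) ^ p + (y / pMean p α x y) ^ p
          - p * ((B / pMean p α A B) ^ (p - 1) * (y / pMean p α x y)))) := by
  have hAB := pMean_normalized hp hα hA hB
  have hxy := pMean_normalized hp hα hx hy
  have hΦ := (pMean_pos (p := p) hα hx hy).ne'
  unfold pMeanTangent
  set Φ := pMean p α x y
  have hx' : x = Φ * (x / Φ) := (mul_div_cancel₀ x hΦ).symm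
  have hy' : y = Φ * (y / Φ) := (mul_div_cancel₀ y hΦ).symm
  set a := A / pMean p α A B
  set b := B / pMean p α A B
  set ξ := x / Φ
  set η := y / Φ
  linear_combination -(Φ * (p - 1)) * hAB - Φ * hxy - (p * (1 - α) * a ^ (p - 1)) * hx'
    - (p * α * b ^ (p - 1)) * hy'

lemma pMeanTangent_le (hp : 1 < p) (hα : α ∈ Set.Icc (0 : ℝ) 1) (hA : 0 < A) (hB : 0 < B)
    (hx : 0 < x) (hy : 0 < y) : pMeanTangent p α A B x y ≤ pMean p α x y := by
  have hgap := pMean_sub_pMeanTangent (by positivity) hα hA hB hx hy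
  have hG := pMean_pos (p := p) hα hA hB
  have hΦ := pMean_pos (p := p) hα hx hy
  have h₁ := rpow_tangent_le hp (div_pos hA hG).le (div_pos hx hΦ).le
  have h₂ := rpow_tangent_le hp (div_pos hB hG).le (div_pos hy hΦ).le
  refine sub_nonneg.1 (nonneg_of_mul_nonneg_right ?_ (by linarith : (0 : ℝ) < p))
  rw [hgap]
  exact mul_nonneg hΦ.le (add_nonneg (mul_nonneg (sub_nonneg.2 hα.2) (sub_nonneg.2 h₁))
    (mul_nonneg hα.1 (sub_nonneg.2 h₂)))

lemma mul_eq_mul_of_pMeanTangent_eq (hp : 1 < p) (hα : α ∈ Set.Ioo (0 : ℝ) 1) (hA : 0 < A)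
    (hB : 0 < B) (hx : 0 < x) (hy : 0 < y)
    (h : pMeanTangent p α A B x y = pMean p α x y) : x * B = y * A := by
  have hα' := Set.Ioo_subset_Icc_self hα
  have hgap := pMean_sub_pMeanTangent (by positivity) hα' hA hB hx hy
  have hG := pMean_pos (p := p) hα' hA hB
  have hΦ := pMean_pos (p := p) hα' hx hy
  rw [h, sub_self, mul_zero, eq_comm, mul_eq_zero, or_iff_right hΦ.ne'] at hgap
  set a := A / pMean p α A B
  set b := B / pMean p α A B
  set ξ := x / pMean p α x y
  set η := y / pMean p α x y
  have h₁ := rpow_tangent_le hp (div_pos hA hG).le (div_pos hx hΦ).le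
  have h₂ := rpow_tangent_le hp (div_pos hB hG).le (div_pos hy hΦ).le
  obtain ⟨h₁', h₂'⟩ := (add_eq_zero_iff_of_nonneg
    (mul_nonneg (sub_pos.2 hα.2).le (sub_nonneg.2 h₁))
    (mul_nonneg hα.1.le (sub_nonneg.2 h₂))).1 hgap
  have haξ : a = ξ := (rpow_tangent_eq_iff hp (div_pos hA hG).le (div_pos hx hΦ).le).1
    (by linarith [(mul_eq_zero.1 h₁').resolve_left (sub_pos.2 hα.2).ne'])
  have hbη : b = η := (rpow_tangent_eq_iff hp (div_pos hB hG).le (div_pos hy hΦ).le).1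
    (by linarith [(mul_eq_zero.1 h₂').resolve_left hα.1.ne'])
  rw [div_eq_div_iff hG.ne' hΦ.ne'] at haξ hbη
  nlinarith

lemma pMeanTangent_self (hp : p ≠ 0) (hα : α ∈ Set.Icc (0 : ℝ) 1) (hA : 0 < A) (hB : 0 < B) :
    pMeanTangent p α A B A B = pMean p α A B := by
  have hG := pMean_pos (p := p) hα hA hB
  have hpow : ∀ {C : ℝ}, 0 < C → (C / pMean p α A B) ^ (p - 1) * C =
      pMean p α A B * (C / pMean p α A B) ^ p := fun hC => by
    rw [Real.rpow_sub_one (div_pos hC hG).ne']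
    field_simp
  calc pMeanTangent p α A B A B
      = pMean p α A B * ((1 - α) * (A / pMean p α A B) ^ p + α * (B / pMean p α A B) ^ p) := by
        rw [pMeanTangent, mul_assoc, mul_assoc, hpow hA, hpow hB]; ring
    _ = pMean p α A B := by rw [pMean_normalized hp hα hA hB, mul_one]

end pMeanTangent

section bodies

variable {n : ℕ} {K L : Set (EuclideanSpace ℝ (Fin n))}

lemma IsConvexBody.smul (hK : IsConvexBody K) {c : ℝ} (hc : c ≠ 0) : IsConvexBody (c • K) :=
  ⟨hK.1.smul c, hK.2.1.smul c, by rw [interior_smul₀ hc]; exact hK.2.2.smul_set⟩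

lemma IsConvexBody.add (hK : IsConvexBody K) (hL : IsConvexBody L) : IsConvexBody (K + L) :=
  ⟨hK.1.add hL.1, hK.2.1.add hL.2.1,
    (hK.2.2.add (hL.2.2.mono interior_subset)).mono subset_interior_add_left⟩

lemma IsConvexBodyO.isConvexBody (hK : IsConvexBodyO K) : IsConvexBody K :=
  ⟨hK.1, hK.2.1, 0, hK.2.2⟩

lemma IsConvexBodyO.zero_mem (hK : IsConvexBodyO K) : 0 ∈ K :=
  interior_subset hK.2.2

lemma IsConvexBodyO.nonempty (hK : IsConvexBodyO K) : K.Nonempty :=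
  ⟨0, hK.zero_mem⟩

lemma IsConvexBodyO.smul (hK : IsConvexBodyO K) {c : ℝ} (hc : c ≠ 0) :
    IsConvexBodyO (c • K) :=
  ⟨hK.1.smul c, hK.2.1.smul c, by rw [interior_smul₀ hc]; exact ⟨0, hK.2.2, smul_zero c⟩⟩

lemma IsConvexBodyO.add (hK : IsConvexBodyO K) (hL : IsConvexBodyO L) : IsConvexBodyO (K + L) :=
  ⟨hK.1.add hL.1, hK.2.1.add hL.2.1,
    subset_interior_add_left ⟨0, hK.2.2, 0, hL.zero_mem, add_zero 0⟩⟩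

end bodies

section supp

variable {n : ℕ} {K L : Set (EuclideanSpace ℝ (Fin n))} {u x : EuclideanSpace ℝ (Fin n)}

lemma le_supp (hK : IsCompact K) (hx : x ∈ K) : ⟪x, u⟫ ≤ supp K u :=
  le_csSup ((hK.image (continuous_id.inner continuous_const)).bddAbove) ⟨x, hx, rfl⟩

lemma supp_le (hK : K.Nonempty) {c : ℝ} (h : ∀ x ∈ K, ⟪x, u⟫ ≤ c) : supp K u ≤ c :=
  csSup_le (hK.image _) (by rintro _ ⟨x, hx, rfl⟩; exact h x hx)

lemma exists_supp_eq (hK : IsCompact K) (hne : K.Nonempty) : ∃ x ∈ K, supp K u = ⟪x, u⟫ := by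
  obtain ⟨x, hx, hmax⟩ := hK.exists_isMaxOn (f := fun x => ⟪x, u⟫) hne
    (continuous_id.inner continuous_const).continuousOn
  exact ⟨x, hx, le_antisymm (supp_le hne hmax) (le_supp hK hx)⟩

lemma supp_mono (hK : K.Nonempty) (hL : IsCompact L) (h : K ⊆ L) : supp K u ≤ supp L u :=
  supp_le hK fun _ hx => le_supp hL (h hx)

lemma supp_nonneg (hK : IsCompact K) (h0 : 0 ∈ K) : 0 ≤ supp K u := by
  simpa using le_supp (u := u) hK h0

lemma supp_singleton : supp {x} u = ⟪x, u⟫ := by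
  rw [supp, Set.image_singleton, csSup_singleton]

lemma supp_smul (hK : IsCompact K) (hne : K.Nonempty) {c : ℝ} (hc : 0 ≤ c) :
    supp (c • K) u = c * supp K u := by
  apply le_antisymm
  · refine supp_le hne.smul_set ?_
    rintro _ ⟨y, hy, rfl⟩
    rw [real_inner_smul_left]
    exact mul_le_mul_of_nonneg_left (le_supp hK hy) hc
  · obtain ⟨x, hx, hs⟩ := exists_supp_eq (u := u) hK hne
    rw [hs, ← real_inner_smul_left]
    exact le_supp (hK.smul c) (Set.smul_mem_smul_set hx)

lemma supp_add (hK : IsCompact K) (hKne : K.Nonempty) (hL : IsCompact L) (hLne : L.Nonempty) :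
    supp (K + L) u = supp K u + supp L u := by
  apply le_antisymm
  · refine supp_le (hKne.add hLne) ?_
    rintro _ ⟨y, hy, z, hz, rfl⟩
    rw [inner_add_left]
    exact add_le_add (le_supp hK hy) (le_supp hL hz)
  · obtain ⟨x, hx, hs⟩ := exists_supp_eq (u := u) hK hKne
    obtain ⟨y, hy, ht⟩ := exists_supp_eq (u := u) hL hLne
    rw [hs, ht, ← inner_add_left]
    exact le_supp (hK.add hL) (Set.add_mem_add hx hy)

lemma supp_smul_add_smul (hK : IsCompact K) (hKne : K.Nonempty) (hL : IsCompact L)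
    (hLne : L.Nonempty) {s t : ℝ} (hs : 0 ≤ s) (ht : 0 ≤ t) :
    supp (s • K + t • L) u = s * supp K u + t * supp L u := by
  rw [supp_add (hK.smul s) hKne.smul_set (hL.smul t) hLne.smul_set, supp_smul hK hKne hs,
    supp_smul hL hLne ht]

lemma IsConvexBodyO.exists_supp_bounds (hK : IsConvexBodyO K) :
    ∃ r R : ℝ, 0 < r ∧ 0 ≤ R ∧ ∀ u : EuclideanSpace ℝ (Fin n), ‖u‖ = 1 →
      r ≤ supp K u ∧ supp K u ≤ R := by
  obtain ⟨r, hr, hball⟩ := Metric.mem_nhds_iff.1 (mem_interior_iff_mem_nhds.1 hK.2.2)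
  obtain ⟨R, hR⟩ := hK.1.isBounded.subset_closedBall 0
  refine ⟨r / 2, R, half_pos hr, by simpa using hR hK.zero_mem, fun u hu => ⟨?_, ?_⟩⟩
  · have hmem : (r / 2) • u ∈ K := hball (by
      simp [norm_smul, hu, abs_of_pos hr, half_lt_self hr])
    simpa [real_inner_smul_left, real_inner_self_eq_norm_sq, hu] using le_supp (u := u) hK.1 hmem
  · refine supp_le hK.nonempty fun x hx => ?_
    calc ⟪x, u⟫ ≤ ‖x‖ * ‖u‖ := real_inner_le_norm x u
      _ ≤ R := by simpa [hu] using hR hx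

lemma IsConvexBodyO.supp_pos (hK : IsConvexBodyO K) (hu : ‖u‖ = 1) : 0 < supp K u := by
  obtain ⟨r, R, hr, -, hbounds⟩ := hK.exists_supp_bounds
  exact hr.trans_le (hbounds u hu).1

end supp

def wulffShape {n : ℕ} (g : EuclideanSpace ℝ (Fin n) → ℝ) : Set (EuclideanSpace ℝ (Fin n)) :=
  {x | ∀ u : EuclideanSpace ℝ (Fin n), ‖u‖ = 1 → ⟪x, u⟫ ≤ g u}

section wulffShape

variable {n : ℕ} {K : Set (EuclideanSpace ℝ (Fin n))} {g g' : EuclideanSpace ℝ (Fin n) → ℝ}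

lemma wulffShape_mono (h : ∀ u, ‖u‖ = 1 → g u ≤ g' u) : wulffShape g ⊆ wulffShape g' :=
  fun _ hx u hu => (hx u hu).trans (h u hu)

lemma wulffShape_congr (h : ∀ u, ‖u‖ = 1 → g u = g' u) : wulffShape g = wulffShape g' :=
  (wulffShape_mono fun u hu => (h u hu).le).antisymm (wulffShape_mono fun u hu => (h u hu).ge)

lemma subset_wulffShape_supp (hK : IsCompact K) : K ⊆ wulffShape (supp K) :=
  fun _ hx _ _ => le_supp hK hx

lemma wulffShape_supp_subset (hKc : Convex ℝ K) (hKcl : IsClosed K) (hne : K.Nonempty) :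
    wulffShape (supp K) ⊆ K := by
  intro x hx
  by_contra hxK
  obtain ⟨f, s, hfK, hfx⟩ := geometric_hahn_banach_closed_point hKc hKcl hxK
  set v := (InnerProductSpace.toDual ℝ (EuclideanSpace ℝ (Fin n))).symm f
  have hfv : ∀ y, f y = ⟪v, y⟫ := fun y => by simp [v]
  have hv : v ≠ 0 := by
    rintro hv
    obtain ⟨y, hy⟩ := hne
    have := hfK y hy
    simp only [hfv, hv, inner_zero_left] at this hfx
    linarith
  have hnv : 0 < ‖v‖ := norm_pos_iff.2 hv
  have hinner : ∀ y, ⟪y, ‖v‖⁻¹ • v⟫ = ‖v‖⁻¹ * f y := fun y => by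
    rw [real_inner_smul_right, real_inner_comm, hfv]
  have hsupp : supp K (‖v‖⁻¹ • v) ≤ ‖v‖⁻¹ * s := supp_le hne fun y hy => by
    rw [hinner]
    exact mul_le_mul_of_nonneg_left (hfK y hy).le (inv_nonneg.2 hnv.le)
  have hxv := hx (‖v‖⁻¹ • v) (norm_smul_inv_norm hv)
  rw [hinner] at hxv
  have := mul_lt_mul_of_pos_left hfx (inv_pos.2 hnv)
  linarith

lemma wulffShape_supp (hK : IsCompact K) (hKc : Convex ℝ K) (hne : K.Nonempty) :
    wulffShape (supp K) = K :=
  (wulffShape_supp_subset hKc hK.isClosed hne).antisymm (subset_wulffShape_supp hK)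

lemma isConvexBodyO_wulffShape {r R : ℝ} (hr : 0 < r) (hR : 0 ≤ R)
    (hg : ∀ u, ‖u‖ = 1 → r ≤ g u ∧ g u ≤ R) : IsConvexBodyO (wulffShape g) := by
  have hrepr : wulffShape g = ⋂ u : EuclideanSpace ℝ (Fin n), ⋂ (_ : ‖u‖ = 1),
      {x | ⟪x, u⟫ ≤ g u} := by
    ext x
    simp [wulffShape]
  have hclosed : IsClosed (wulffShape g) := by
    rw [hrepr]
    exact isClosed_iInter fun u => isClosed_iInter fun _ =>
      isClosed_le (continuous_id.inner continuous_const) continuous_const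
  have hbdd : wulffShape g ⊆ Metric.closedBall 0 R := by
    intro x hx
    rcases eq_or_ne x 0 with rfl | hx0
    · simpa using hR
    have hu := norm_smul_inv_norm (𝕜 := ℝ) hx0
    have hxu : ⟪x, ‖x‖⁻¹ • x⟫ = ‖x‖ := by
      rw [real_inner_smul_right, real_inner_self_eq_norm_sq, sq, ← mul_assoc,
        inv_mul_cancel₀ (norm_ne_zero_iff.2 hx0), one_mul]
    simpa [hxu] using (hx _ hu).trans (hg _ hu).2
  have hball : Metric.ball 0 r ⊆ wulffShape g := fun x hx u hu =>
    calc ⟪x, u⟫ ≤ ‖x‖ * ‖u‖ := real_inner_le_norm x u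
      _ ≤ g u := by simpa [hu] using (mem_ball_zero_iff.1 hx).le.trans (hg u hu).1
  refine ⟨Metric.isCompact_of_isClosed_isBounded hclosed
    (Metric.isBounded_closedBall.subset hbdd), ?_,
    interior_maximal hball Metric.isOpen_ball (Metric.mem_ball_self hr)⟩
  rw [hrepr]
  exact convex_iInter fun u => convex_iInter fun _ => convex_halfSpace_le
    ⟨fun a b => inner_add_left a b u, fun c a => real_inner_smul_left a u c⟩ _

end wulffShape


noncomputable def tangentBody {n : ℕ} (p α A B : ℝ) (K L : Set (EuclideanSpace ℝ (Fin n))) :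
    Set (EuclideanSpace ℝ (Fin n)) :=
  ((1 - α) * (A / pMean p α A B) ^ (p - 1)) • K + (α * (B / pMean p α A B) ^ (p - 1)) • L

section lpComb

variable {n : ℕ} {K L M : Set (EuclideanSpace ℝ (Fin n))} {p α A B : ℝ}

lemma lpComb_eq_wulffShape :
    lpComb p α K L = wulffShape (fun u => pMean p α (supp K u) (supp L u)) :=
  rfl

lemma isConvexBodyO_lpComb (hp : 0 < p) (hα : α ∈ Set.Icc (0 : ℝ) 1) (hK : IsConvexBodyO K)
    (hL : IsConvexBodyO L) : IsConvexBodyO (lpComb p α K L) := by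
  obtain ⟨rK, RK, hrK, hRK, hK'⟩ := hK.exists_supp_bounds
  obtain ⟨rL, RL, hrL, hRL, hL'⟩ := hL.exists_supp_bounds
  refine isConvexBodyO_wulffShape (lt_min hrK hrL) (hRK.trans (le_max_left RK RL))
    fun u hu => ⟨?_, ?_⟩
  · calc min rK rL = pMean p α (min rK rL) (min rK rL) :=
          (pMean_self hp.ne' (lt_min hrK hrL).le).symm
      _ ≤ _ := pMean_mono hp hα (lt_min hrK hrL).le (lt_min hrK hrL).le
          ((min_le_left _ _).trans (hK' u hu).1) ((min_le_right _ _).trans (hL' u hu).1)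
  · calc _ ≤ pMean p α (max RK RL) (max RK RL) :=
          pMean_mono hp hα (supp_nonneg hK.1 hK.zero_mem) (supp_nonneg hL.1 hL.zero_mem)
            ((hK' u hu).2.trans (le_max_left _ _)) ((hL' u hu).2.trans (le_max_right _ _))
      _ = max RK RL := pMean_self hp.ne' (hRK.trans (le_max_left _ _))

lemma lpComb_eq_of_supp (hM : IsCompact M) (hMc : Convex ℝ M) (hMne : M.Nonempty)
    (h : ∀ u : EuclideanSpace ℝ (Fin n), ‖u‖ = 1 → pMean p α (supp K u) (supp L u) = supp M u) :
    lpComb p α K L = M := by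
  rw [lpComb_eq_wulffShape, wulffShape_congr h, wulffShape_supp hM hMc hMne]

lemma lpComb_zero (hp : p ≠ 0) (hK : IsConvexBodyO K) : lpComb p 0 K L = K :=
  lpComb_eq_of_supp hK.1 hK.2.1 hK.nonempty fun _ _ =>
    pMean_zero hp (supp_nonneg hK.1 hK.zero_mem)

lemma lpComb_one (hp : p ≠ 0) (hL : IsConvexBodyO L) : lpComb p 1 K L = L :=
  lpComb_eq_of_supp hL.1 hL.2.1 hL.nonempty fun _ _ =>
    pMean_one hp (supp_nonneg hL.1 hL.zero_mem)

lemma lpComb_smul_left (hp : p ≠ 0) (hα : α ∈ Set.Icc (0 : ℝ) 1) (hL : IsConvexBodyO L)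
    {c : ℝ} (hc : 0 ≤ c) : lpComb p α (c • L) L = pMean p α c 1 • L := by
  have hc' : 0 ≤ pMean p α c 1 := pMean_nonneg hα hc zero_le_one
  refine lpComb_eq_of_supp (hL.1.smul _) (hL.2.1.smul _) hL.nonempty.smul_set fun u _ => ?_
  have hLu := supp_nonneg (u := u) hL.1 hL.zero_mem
  have := pMean_mul hp hα hLu hc zero_le_one
  rw [mul_one] at this
  rw [supp_smul hL.1 hL.nonempty hc, supp_smul hL.1 hL.nonempty hc', mul_comm c, this, mul_comm]

lemma subset_lpComb (hp : 0 < p) (hα : α ∈ Set.Icc (0 : ℝ) 1) (hK : IsConvexBodyO K)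
    (hL : IsConvexBodyO L) (hKL : K ⊆ L) : K ⊆ lpComb p α K L := by
  refine (subset_wulffShape_supp hK.1).trans (wulffShape_mono fun u _ => ?_)
  have hKu := supp_nonneg (u := u) hK.1 hK.zero_mem
  calc supp K u = pMean p α (supp K u) (supp K u) := (pMean_self hp.ne' hKu).symm
    _ ≤ _ := pMean_mono hp hα hKu hKu le_rfl (supp_mono hK.nonempty hL.1 hKL)

lemma lpComb_subset (hp : 0 < p) (hα : α ∈ Set.Icc (0 : ℝ) 1) (hK : IsConvexBodyO K)
    (hL : IsConvexBodyO L) (hKL : K ⊆ L) : lpComb p α K L ⊆ L := by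
  refine (wulffShape_mono fun u _ => ?_).trans (wulffShape_supp hL.1 hL.2.1 hL.nonempty).subset
  have hLu := supp_nonneg (u := u) hL.1 hL.zero_mem
  calc _ ≤ pMean p α (supp L u) (supp L u) :=
        pMean_mono hp hα (supp_nonneg hK.1 hK.zero_mem) hLu (supp_mono hK.nonempty hL.1 hKL) le_rfl
    _ = supp L u := pMean_self hp.ne' hLu

lemma supp_tangentBody (hα : α ∈ Set.Icc (0 : ℝ) 1) (hA : 0 ≤ A) (hB : 0 ≤ B)
    (hK : IsConvexBodyO K) (hL : IsConvexBodyO L) (u : EuclideanSpace ℝ (Fin n)) :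
    supp (tangentBody p α A B K L) u = pMeanTangent p α A B (supp K u) (supp L u) := by
  have hG := pMean_nonneg (p := p) hα hA hB
  exact supp_smul_add_smul hK.1 hK.nonempty hL.1 hL.nonempty
    (mul_nonneg (sub_nonneg.2 hα.2) (Real.rpow_nonneg (div_nonneg hA hG) _))
    (mul_nonneg hα.1 (Real.rpow_nonneg (div_nonneg hB hG) _))

lemma isConvexBodyO_tangentBody (hα : α ∈ Set.Ioo (0 : ℝ) 1) (hA : 0 < A) (hB : 0 < B)
    (hK : IsConvexBodyO K) (hL : IsConvexBodyO L) : IsConvexBodyO (tangentBody p α A B K L) :=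
  have hG := pMean_pos (p := p) (Set.Ioo_subset_Icc_self hα) hA hB
  (hK.smul (mul_pos (sub_pos.2 hα.2) (Real.rpow_pos_of_pos (div_pos hA hG) _)).ne').add
    (hL.smul (mul_pos hα.1 (Real.rpow_pos_of_pos (div_pos hB hG) _)).ne')

lemma tangentBody_subset_lpComb (hp : 1 < p) (hα : α ∈ Set.Icc (0 : ℝ) 1) (hA : 0 < A)
    (hB : 0 < B) (hK : IsConvexBodyO K) (hL : IsConvexBodyO L) :
    tangentBody p α A B K L ⊆ lpComb p α K L := fun x hx u hu =>
  calc ⟪x, u⟫ ≤ supp (tangentBody p α A B K L) u :=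
        le_supp ((hK.1.smul _).add (hL.1.smul _)) hx
    _ = pMeanTangent p α A B (supp K u) (supp L u) := supp_tangentBody hα hA.le hB.le hK hL u
    _ ≤ _ := pMeanTangent_le hp hα hA hB (hK.supp_pos hu) (hL.supp_pos hu)

lemma supp_lpComb (hp : 1 < p) (hα : α ∈ Set.Icc (0 : ℝ) 1) (hK : IsConvexBodyO K)
    (hL : IsConvexBodyO L) {u : EuclideanSpace ℝ (Fin n)} (hu : ‖u‖ = 1) :
    supp (lpComb p α K L) u = pMean p α (supp K u) (supp L u) := by
  have hKu := hK.supp_pos hu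
  have hLu := hL.supp_pos hu
  refine le_antisymm (supp_le (isConvexBodyO_lpComb (by linarith) hα hK hL).nonempty
    fun x hx => hx u hu) ?_
  calc pMean p α (supp K u) (supp L u)
      = supp (tangentBody p α (supp K u) (supp L u) K L) u := by
        rw [supp_tangentBody hα hKu.le hLu.le hK hL, pMeanTangent_self (by linarith) hα hKu hLu]
    _ ≤ _ := supp_mono ((hK.nonempty.smul_set).add hL.nonempty.smul_set)
        (isConvexBodyO_lpComb (by linarith) hα hK hL).1
        (tangentBody_subset_lpComb hp hα hKu hLu hK hL)

end lpComb

lemma exists_norm_eq_one {n : ℕ} (hn : 1 ≤ n) : ∃ e : EuclideanSpace ℝ (Fin n), ‖e‖ = 1 := by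
  have : Nonempty (Fin n) := ⟨⟨0, hn⟩⟩
  exact exists_norm_eq _ zero_le_one

lemma eq_of_supp_eq {n : ℕ} {K L : Set (EuclideanSpace ℝ (Fin n))} (hK : IsConvexBodyO K)
    (hL : IsCompact L) (hLc : Convex ℝ L) (hLne : L.Nonempty)
    (h : ∀ u : EuclideanSpace ℝ (Fin n), ‖u‖ = 1 → supp K u = supp L u) : K = L := by
  rw [← wulffShape_supp hK.1 hK.2.1 hK.nonempty, wulffShape_congr h, wulffShape_supp hL hLc hLne]

/-- The witness is half of `L`, pushed off-center. -/
lemma exists_subset_not_dilate {n : ℕ} (hn : 1 ≤ n) {L : Set (EuclideanSpace ℝ (Fin n))}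
    (hL : IsConvexBodyO L) :
    ∃ K, IsConvexBodyO K ∧ K ⊆ L ∧ ¬ ∃ c : ℝ, 0 < c ∧ K = c • L := by
  obtain ⟨e, he⟩ := exists_norm_eq_one hn
  obtain ⟨ρ, hρ, hball⟩ := Metric.isOpen_iff.1 isOpen_interior 0 hL.2.2
  set y := (ρ / 2) • e
  have hy : ‖y‖ < ρ := by simp [y, norm_smul, he, abs_of_pos hρ, half_lt_self hρ]
  have hyL : y ∈ interior L := hball (mem_ball_zero_iff.2 hy)
  have hnyL : -y ∈ interior L := hball (mem_ball_zero_iff.2 (by rwa [norm_neg]))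
  set K := (1 / 2 : ℝ) • L + (1 / 2 : ℝ) • {y}
  have hK : IsConvexBodyO K :=
    ⟨(hL.1.smul _).add (isCompact_singleton.smul _),
      (hL.2.1.smul _).add ((convex_singleton y).smul _),
      subset_interior_add_left ⟨(1 / 2 : ℝ) • -y,
        by rw [interior_smul₀ (by norm_num)]; exact Set.smul_mem_smul_set hnyL,
        (1 / 2 : ℝ) • y, Set.smul_mem_smul_set rfl, by simp⟩⟩
  have hKL : K ⊆ L :=
    (Set.add_subset_add_left (Set.smul_set_mono (Set.singleton_subset_iff.2
      (interior_subset hyL)))).trans (hL.2.1.set_combo_subset (by norm_num) (by norm_num)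
      (by norm_num))
  refine ⟨K, hK, hKL, ?_⟩
  rintro ⟨c, hc, hcL⟩
  have hsupp : ∀ u : EuclideanSpace ℝ (Fin n),
      c * supp L u = 1 / 2 * supp L u + 1 / 2 * ⟪y, u⟫ := fun u => by
    rw [← supp_smul hL.1 hL.nonempty hc.le, ← hcL, supp_smul_add_smul hL.1 hL.nonempty
      isCompact_singleton (Set.singleton_nonempty y) (by norm_num) (by norm_num), supp_singleton]
  have hye : ⟪y, e⟫ = ρ / 2 := by
    rw [real_inner_smul_left, real_inner_self_eq_norm_sq, he, one_pow, mul_one]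
  -- In the directions `e` and `-e` this gives `c > 1 / 2` and `c < 1 / 2`.
  have h₁ := hsupp e
  have h₂ := hsupp (-e)
  rw [hye] at h₁
  rw [inner_neg_right, hye] at h₂
  have := hL.supp_pos he
  have := hL.supp_pos (u := -e) (by rw [norm_neg, he])
  nlinarith

def LpCombAffine {n : ℕ} (F : Set (EuclideanSpace ℝ (Fin n)) → ℝ) (p : ℝ)
    (K L : Set (EuclideanSpace ℝ (Fin n))) : Prop :=
  ∀ α : ℝ, α ∈ Set.Icc (0:ℝ) 1 →
    F (lpComb p α K L) ^ p = (1 - α) * F (lpComb p 0 K L) ^ p + α * F (lpComb p 1 K L) ^ p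

section functional

variable {n : ℕ} {F : Set (EuclideanSpace ℝ (Fin n)) → ℝ} {K L : Set (EuclideanSpace ℝ (Fin n))}
  {p : ℝ}

lemma lpCombAffine_of_subset_of_eq
    (hFmono : ∀ K L, IsConvexBody K → IsConvexBody L → K ⊆ L → F K ≤ F L)
    (hp : 0 < p) (hK : IsConvexBodyO K) (hL : IsConvexBodyO L) (hKL : K ⊆ L) (hF : F K = F L) :
    LpCombAffine F p K L := by
  have hconst : ∀ α ∈ Set.Icc (0 : ℝ) 1, F (lpComb p α K L) = F K := fun α hα =>
    have hM := (isConvexBodyO_lpComb hp hα hK hL).isConvexBody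
    le_antisymm (hF ▸ hFmono _ _ hM hL.isConvexBody (lpComb_subset hp hα hK hL hKL))
      (hFmono _ _ hK.isConvexBody hM (subset_lpComb hp hα hK hL hKL))
  intro α hα
  rw [hconst α hα, hconst 0 (by simp), hconst 1 (by simp)]
  ring

lemma lpCombAffine_smul_left (hF0 : ∀ K, IsConvexBody K → 0 ≤ F K)
    (hFhom : ∀ c : ℝ, 0 < c → ∀ K, IsConvexBody K → F (c • K) = c * F K)
    (hp : 0 < p) (hL : IsConvexBodyO L) {c : ℝ} (hc : 0 < c) :
    LpCombAffine F p (c • L) L := by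
  have key : ∀ α ∈ Set.Icc (0 : ℝ) 1,
      F (lpComb p α (c • L) L) ^ p = ((1 - α) * c ^ p + α) * F L ^ p := fun α hα => by
    rw [lpComb_smul_left hp.ne' hα hL hc.le,
      hFhom _ (pMean_pos hα hc zero_lt_one) L hL.isConvexBody,
      Real.mul_rpow (pMean_nonneg hα hc.le zero_le_one) (hF0 L hL.isConvexBody),
      pMean_rpow hp.ne' hα hc.le zero_le_one, Real.one_rpow, mul_one]
  intro α hα
  rw [key α hα, key 0 (by simp), key 1 (by simp)]
  ring

lemma le_apply_smul_add_smul
    (hFhom : ∀ c : ℝ, 0 < c → ∀ K, IsConvexBody K → F (c • K) = c * F K)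
    (hFconc : ∀ K L, IsConvexBody K → IsConvexBody L → ∀ α : ℝ, α ∈ Set.Ioo (0:ℝ) 1 →
      (1 - α) * F K + α * F L ≤ F ((1 - α) • K + α • L))
    (hK : IsConvexBody K) (hL : IsConvexBody L) {s t : ℝ} (hs : 0 < s) (ht : 0 < t) :
    s * F K + t * F L ≤ F (s • K + t • L) := by
  have hst : 0 < s + t := add_pos hs ht
  have hset : s • K + t • L = (s + t) • ((s / (s + t)) • K + (t / (s + t)) • L) := by
    rw [smul_add, smul_smul, smul_smul, mul_div_cancel₀ _ hst.ne', mul_div_cancel₀ _ hst.ne']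
  have hconc := hFconc K L hK hL (t / (s + t))
    ⟨div_pos ht hst, (div_lt_one hst).2 (lt_add_of_pos_left t hs)⟩
  rw [show 1 - t / (s + t) = s / (s + t) by field_simp; ring] at hconc
  rw [hset, hFhom _ hst _ ((hK.smul (by positivity)).add (hL.smul (by positivity)))]
  calc s * F K + t * F L = (s + t) * (s / (s + t) * F K + t / (s + t) * F L) := by
        field_simp
    _ ≤ _ := mul_le_mul_of_nonneg_left hconc hst.le

lemma pMeanTangent_le_apply_tangentBody
    (hFhom : ∀ c : ℝ, 0 < c → ∀ K, IsConvexBody K → F (c • K) = c * F K)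
    (hFconc : ∀ K L, IsConvexBody K → IsConvexBody L → ∀ α : ℝ, α ∈ Set.Ioo (0:ℝ) 1 →
      (1 - α) * F K + α * F L ≤ F ((1 - α) • K + α • L))
    {α A B : ℝ} (hα : α ∈ Set.Ioo (0 : ℝ) 1) (hA : 0 < A) (hB : 0 < B)
    (hK : IsConvexBody K) (hL : IsConvexBody L) :
    pMeanTangent p α A B (F K) (F L) ≤ F (tangentBody p α A B K L) := by
  have hG := pMean_pos (p := p) (Set.Ioo_subset_Icc_self hα) hA hB
  exact le_apply_smul_add_smul hFhom hFconc hK hL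
    (mul_pos (sub_pos.2 hα.2) (Real.rpow_pos_of_pos (div_pos hA hG) _))
    (mul_pos hα.1 (Real.rpow_pos_of_pos (div_pos hB hG) _))

lemma LpCombAffine.apply_lpComb_eq_pMean (hF0 : ∀ K, IsConvexBody K → 0 ≤ F K) (hp : 0 < p)
    (hK : IsConvexBodyO K) (hL : IsConvexBodyO L) (haff : LpCombAffine F p K L) {α : ℝ}
    (hα : α ∈ Set.Icc (0 : ℝ) 1) : F (lpComb p α K L) = pMean p α (F K) (F L) := by
  have hFK := hF0 K hK.isConvexBody
  have hFL := hF0 L hL.isConvexBody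
  have := haff α hα
  rw [lpComb_zero hp.ne' hK, lpComb_one hp.ne' hL] at this
  rw [← Real.rpow_left_inj (hF0 _ (isConvexBodyO_lpComb hp hα hK hL).isConvexBody)
    (pMean_nonneg hα hFK hFL) hp.ne', pMean_rpow hp.ne' hα hFK hFL, this]

lemma pos_of_strictMono (hn : 1 ≤ n)
    (hFhom : ∀ c : ℝ, 0 < c → ∀ K, IsConvexBody K → F (c • K) = c * F K)
    (hS : ∀ K L, IsConvexBodyO K → IsConvexBodyO L → K ⊂ L → F K < F L)
    (hK : IsConvexBodyO K) : 0 < F K := by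
  obtain ⟨e, he⟩ := exists_norm_eq_one hn
  have hsub : (1 / 2 : ℝ) • K ⊆ K := by
    rintro _ ⟨x, hx, rfl⟩
    exact hK.2.1.smul_mem_of_zero_mem hK.zero_mem hx ⟨by norm_num, by norm_num⟩
  have hne : (1 / 2 : ℝ) • K ≠ K := fun h => by
    have := congrArg (supp · e) h
    simp only [supp_smul hK.1 hK.nonempty (by norm_num : (0 : ℝ) ≤ 1 / 2)] at this
    linarith [hK.supp_pos he]
  have := hS _ _ (hK.smul (by norm_num)) hK (Set.ssubset_iff_subset_ne.2 ⟨hsub, hne⟩)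
  rw [hFhom _ (by norm_num) K hK.isConvexBody] at this
  linarith

lemma exists_eq_smul_of_lpCombAffine (hn : 1 ≤ n) (hF0 : ∀ K, IsConvexBody K → 0 ≤ F K)
    (hFhom : ∀ c : ℝ, 0 < c → ∀ K, IsConvexBody K → F (c • K) = c * F K)
    (hFconc : ∀ K L, IsConvexBody K → IsConvexBody L → ∀ α : ℝ, α ∈ Set.Ioo (0:ℝ) 1 →
      (1 - α) * F K + α * F L ≤ F ((1 - α) • K + α • L))
    (hS : ∀ K L, IsConvexBodyO K → IsConvexBodyO L → K ⊂ L → F K < F L)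
    (hp : 1 < p) (hK : IsConvexBodyO K) (hL : IsConvexBodyO L) (haff : LpCombAffine F p K L) :
    ∃ c : ℝ, 0 < c ∧ K = c • L := by
  have hp0 : 0 < p := by linarith
  have hα : (1 / 2 : ℝ) ∈ Set.Ioo 0 1 := ⟨by norm_num, by norm_num⟩
  have hα' := Set.Ioo_subset_Icc_self hα
  have hA := pos_of_strictMono hn hFhom hS hK
  have hB := pos_of_strictMono hn hFhom hS hL
  set M := lpComb p (1 / 2) K L
  have hM := isConvexBodyO_lpComb hp0 hα' hK hL
  have hFM : F M = pMean p (1 / 2) (F K) (F L) := haff.apply_lpComb_eq_pMean hF0 hp0 hK hL hα'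
  set T := tangentBody p (1 / 2) (F K) (F L) K L
  have hT : IsConvexBodyO T := isConvexBodyO_tangentBody hα hA hB hK hL
  have hsuppT : ∀ u, supp T u = pMeanTangent p (1 / 2) (F K) (F L) (supp K u) (supp L u) :=
    supp_tangentBody hα' hA.le hB.le hK hL
  have hTM : T ⊆ M := tangentBody_subset_lpComb hp hα' hA hB hK hL
  have hFMT : F M ≤ F T := by
    rw [hFM, ← pMeanTangent_self hp0.ne' hα' hA hB]
    exact pMeanTangent_le_apply_tangentBody hFhom hFconc hα hA hB hK.isConvexBody hL.isConvexBody
  have hTeq : T = M := by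
    by_contra hne
    exact (hS T M hT hM (Set.ssubset_iff_subset_ne.2 ⟨hTM, hne⟩)).not_ge hFMT
  refine ⟨F K / F L, div_pos hA hB, eq_of_supp_eq hK (hL.1.smul _) (hL.2.1.smul _)
    hL.nonempty.smul_set fun u hu => ?_⟩
  have hprop := mul_eq_mul_of_pMeanTangent_eq hp hα hA hB (hK.supp_pos hu) (hL.supp_pos hu)
    (by rw [← hsuppT, hTeq, supp_lpComb hp hα' hK hL hu])
  rw [supp_smul hL.1 hL.nonempty (div_pos hA hB).le]
  field_simp
  linarith

end functional

/-- Theorem 3.2. Let `F` be nonnegative, positively homogeneous,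
increasing and concave on convex bodies, and `1 < p < ∞`. Then the following are
equivalent: (1) for all `K, L ∈ 𝒦ⁿₒ`, the function
`F_{p;K,L} : α ↦ F((1-α)·_p K +_p α·_p L)^p` is affine on `[0,1]` if and only if `K`
and `L` are dilates; (2) `F` restricted to `𝒦ⁿₒ` is strictly increasing. -/
theorem affine_iff_dilates_characterization {n : ℕ} (hn : 1 ≤ n)
    (F : Set (EuclideanSpace ℝ (Fin n)) → ℝ)
    (hF0 : ∀ K, IsConvexBody K → 0 ≤ F K)
    (hFhom : ∀ c : ℝ, 0 < c → ∀ K, IsConvexBody K → F (c • K) = c * F K)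
    (hFmono : ∀ K L, IsConvexBody K → IsConvexBody L → K ⊆ L → F K ≤ F L)
    (hFconc : ∀ K L, IsConvexBody K → IsConvexBody L → ∀ α : ℝ, α ∈ Set.Ioo (0:ℝ) 1 →
      (1 - α) * F K + α * F L ≤ F ((1 - α) • K + α • L))
    (p : ℝ) (hp : 1 < p) :
    (∀ K L, IsConvexBodyO K → IsConvexBodyO L →
      ((∀ α : ℝ, α ∈ Set.Icc (0:ℝ) 1 →
          F (lpComb p α K L) ^ p =
            (1 - α) * F (lpComb p 0 K L) ^ p + α * F (lpComb p 1 K L) ^ p) ↔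
        ∃ c : ℝ, 0 < c ∧ K = c • L)) ↔
    (∀ K L, IsConvexBodyO K → IsConvexBodyO L → K ⊂ L → F K < F L) := by
  have hp0 : 0 < p := by linarith
  constructor
  · intro hchar K L hK hL hKL
    by_contra! hFLK
    have hFKL : F K = F L := (hFmono K L hK.isConvexBody hL.isConvexBody hKL.subset).antisymm hFLK
    obtain ⟨c, hc, rfl⟩ :=
      (hchar K L hK hL).1 (lpCombAffine_of_subset_of_eq hFmono hp0 hK hL hKL.subset hFKL)
    have hFL : F L = 0 := by
      by_contra hFL
      rw [hFhom c hc L hL.isConvexBody, mul_eq_right₀ hFL] at hFKL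
      exact hKL.ne (by rw [hFKL, one_smul])
    obtain ⟨K', hK', hK'L, hK'dil⟩ := exists_subset_not_dilate hn hL
    have hFK' : F K' = F L := le_antisymm (hFmono K' L hK'.isConvexBody hL.isConvexBody hK'L)
      (hFL ▸ hF0 K' hK'.isConvexBody)
    exact hK'dil ((hchar K' L hK' hL).1 (lpCombAffine_of_subset_of_eq hFmono hp0 hK' hL hK'L hFK'))
  · intro hS K L hK hL
    refine ⟨exists_eq_smul_of_lpCombAffine hn hF0 hFhom hFconc hS hp hK hL, ?_⟩
    rintro ⟨c, hc, rfl⟩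
    exact lpCombAffine_smul_left hF0 hFhom hp0 hL hc
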